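/- Let f : ℝ^d → ℝ ∪ {+∞} be ρ-strongly convex (i.e., f - (ρ/2)‖·‖² is convex). For any ε ≥ 0, any x ∈ dom f, and any v in the ε-subdifferential of f at x, one has 2ε + f(y) ≥ f(x) + ⟨v, y - x⟩ + (ρ/4)‖y - x‖² for all y ∈ ℝ^d. -/

import Mathlib

open scoped RealInnerProductSpace

/- Strong convexity at the midpoint `m` of `x` and `y` bounds `f m` above by the average of
`f x` and `f y` minus `(ρ/8)‖y - x‖²`, while `v ∈ ∂_ε f(x)` bounds `f m` below by
`f x + ⟨v, y - x⟩/2 - ε`. Comparing the two bounds and multiplying by two gives the claim; the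
halving of the step is what turns `ε` into `2ε` and `ρ/2` into `ρ/4`. -/

theorem EReal.add_coe_le_coe_add_of_le_midpoint {a b : EReal} (ha : a ≠ ⊤) {q e s : ℝ}
    (h : a + (((q - e) / 2 : ℝ) : EReal) ≤
      ((1 / 2 : ℝ) : EReal) * b + ((1 / 2 : ℝ) : EReal) * a - ((s / 2 : ℝ) : EReal)) :
    a + ((q + s : ℝ) : EReal) ≤ (e : EReal) + b := by
  induction a using EReal.rec with
  | bot => simp
  | top => exact absurd rfl ha
  | coe a =>
    induction b using EReal.rec with
    | bot =>
      rw [EReal.mul_bot_of_pos (by norm_num), EReal.bot_add, EReal.bot_sub,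
        ← EReal.coe_add] at h
      exact absurd h (EReal.bot_lt_coe _).not_ge
    | top => simp
    | coe b =>
      simp only [← EReal.coe_mul, ← EReal.coe_add, ← EReal.coe_sub,
        EReal.coe_le_coe_iff] at h ⊢
      linarith

theorem stmt0_general {d : ℕ} (f : EuclideanSpace ℝ (Fin d) → EReal) (ρ : ℝ)
    (hconv : ∀ x y : EuclideanSpace ℝ (Fin d), ∀ t : ℝ, 0 ≤ t → t ≤ 1 →
      f (t • y + (1 - t) • x) ≤
        (t : EReal) * f y + ((1 - t : ℝ) : EReal) * f x
          - ((ρ * t * (1 - t) / 2 * ‖y - x‖ ^ 2 : ℝ) : EReal))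
    (ε : ℝ)
    (x : EuclideanSpace ℝ (Fin d)) (hx : f x ≠ ⊤)
    (v : EuclideanSpace ℝ (Fin d))
    (hv : ∀ z : EuclideanSpace ℝ (Fin d),
      f z ≥ f x + ((⟪z - x, v⟫ - ε : ℝ) : EReal)) :
    ∀ y : EuclideanSpace ℝ (Fin d),
      ((2 * ε : ℝ) : EReal) + f y ≥
        f x + ((⟪v, y - x⟫ + ρ / 4 * ‖y - x‖ ^ 2 : ℝ) : EReal) := by
  intro y
  set m := (1 / 2 : ℝ) • y + (1 - 1 / 2 : ℝ) • x
  have hinner : ⟪m - x, v⟫ - ε = (⟪v, y - x⟫ - 2 * ε) / 2 := by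
    have hmx : m - x = (1 / 2 : ℝ) • (y - x) := by module
    rw [hmx, real_inner_smul_left, real_inner_comm]
    ring
  have hupper : f m ≤ ((1 / 2 : ℝ) : EReal) * f y + ((1 / 2 : ℝ) : EReal) * f x
      - ((ρ / 4 * ‖y - x‖ ^ 2 / 2 : ℝ) : EReal) := by
    convert hconv x y (1 / 2) (by norm_num) (by norm_num) using 4
    · norm_num
    · ring
  have hlower := hv m
  rw [hinner] at hlower
  exact EReal.add_coe_le_coe_add_of_le_midpoint hx (hlower.trans hupper)

/-- Lemma 1 of the paper. If `f : ℝ^d → ℝ ∪ {+∞}` is ρ-strongly convex,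
`ε ≥ 0`, `x ∈ dom f` and `v ∈ ∂_ε f(x)`, then
`2ε + f(y) ≥ f(x) + ⟨v, y - x⟩ + (ρ/4)‖y - x‖²` for all `y`. -/
theorem stmt0 {d : ℕ} (f : EuclideanSpace ℝ (Fin d) → EReal) (ρ : ℝ)
    (hconv : ∀ x y : EuclideanSpace ℝ (Fin d), ∀ t : ℝ, 0 ≤ t → t ≤ 1 →
      f (t • y + (1 - t) • x) ≤
        (t : EReal) * f y + ((1 - t : ℝ) : EReal) * f x
          - ((ρ * t * (1 - t) / 2 * ‖y - x‖ ^ 2 : ℝ) : EReal))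
    (ε : ℝ) (hε : 0 ≤ ε)
    (x : EuclideanSpace ℝ (Fin d)) (hx : f x ≠ ⊤)
    (v : EuclideanSpace ℝ (Fin d))
    (hv : ∀ z : EuclideanSpace ℝ (Fin d),
      f z ≥ f x + ((⟪z - x, v⟫ - ε : ℝ) : EReal)) :
    ∀ y : EuclideanSpace ℝ (Fin d),
      ((2 * ε : ℝ) : EReal) + f y ≥
        f x + ((⟪v, y - x⟫ + ρ / 4 * ‖y - x‖ ^ 2 : ℝ) : EReal) :=
  stmt0_general f ρ hconv ε x hx v hv
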